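/- Let T be an essentially small triangulated category in which every object is a finite direct sum of indecomposables, and suppose T is a block (equivalently path-connected). Then for all indecomposable objects X and Y there exists a path from X to Y[m] for some m ≥ 0. -/

import Mathlib

/-!
STATEMENT 11: Let `T` be an essentially small triangulated category in which every object
is a finite direct sum of indecomposables, and suppose `T` is a block.  Then for all
indecomposable objects `X` and `Y` there is a path from `X` to `Y⟦m⟧` for some `m ≥ 0`.
-/
open CategoryTheory Category Limits Pretriangulated

section PathsAndBlocks

variable {C : Type*} [Category C] [Preadditive C] [HasZeroObject C] [HasShift C ℤ]
  [∀ n : ℤ, (shiftFunctor C n).Additive] [Pretriangulated C]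
  [HasBinaryBiproducts C] [HasFiniteBiproducts C]

/-- An object is indecomposable if it is non-zero and has no non-trivial
direct sum decomposition. -/
def IsIndec (X : C) : Prop :=
  ¬ IsZero X ∧ ∀ Y Z : C, (X ≅ Y ⊞ Z) → IsZero Y ∨ IsZero Z

/-- A single step of a path: both objects are indecomposable and either there is a
non-zero morphism `X ⟶ Y` or `Y = X⟦1⟧`. -/
def PathStep (X Y : C) : Prop :=
  IsIndec X ∧ IsIndec Y ∧ ((∃ f : X ⟶ Y, f ≠ 0) ∨ Nonempty (Y ≅ X⟦(1 : ℤ)⟧))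

/-- There is a path `X ⇝ Y`: a finite sequence of path steps. -/
def HasPath : C → C → Prop := Relation.ReflTransGen PathStep

/-- There is a walk from `X` to `Y`: a finite sequence of forward or backward path steps. -/
def HasWalk : C → C → Prop := Relation.ReflTransGen (fun X Y => PathStep X Y ∨ PathStep Y X)

/-- Every object is a finite direct sum of indecomposable objects. -/
def AllObjectsDecompose : Prop :=
  ∀ X : C, ∃ (n : ℕ) (G : Fin n → C), (∀ i, IsIndec (G i)) ∧ Nonempty (X ≅ ⨁ G)

variable (C) in
/-- A non-trivial decomposition of the triangulated category `C` into a product of two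
triangulated subcategories: two iso-closed, shift-closed classes of objects, each
containing a non-zero object, with no non-zero morphisms between them in either
direction, such that every object is a direct sum of an object of each. -/
def IsProductDecomp (P Q : C → Prop) : Prop :=
  (∀ {X Y : C}, (X ≅ Y) → P X → P Y) ∧ (∀ {X Y : C}, (X ≅ Y) → Q X → Q Y) ∧
  (∃ X, P X ∧ ¬ IsZero X) ∧ (∃ X, Q X ∧ ¬ IsZero X) ∧
  (∀ (X Y : C), P X → Q Y → ∀ f : X ⟶ Y, f = 0) ∧
  (∀ (X Y : C), Q X → P Y → ∀ f : X ⟶ Y, f = 0) ∧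
  (∀ (X : C) (n : ℤ), P X → P (X⟦n⟧)) ∧ (∀ (X : C) (n : ℤ), Q X → Q (X⟦n⟧)) ∧
  (∀ X : C, ∃ X' X'' : C, P X' ∧ Q X'' ∧ Nonempty (X ≅ X' ⊞ X''))

variable (C) in
/-- `C` is a block: it admits no non-trivial product decomposition. -/
def IsBlock : Prop := ¬ ∃ P Q : C → Prop, IsProductDecomp C P Q

end PathsAndBlocks

/-!
Fix an indecomposable `X` and call an indecomposable `Z` reachable when there is a path from `X`
to some `Z⟦m⟧` with `m ≥ 0`. Reachability is invariant under all shifts, because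
`Z⟦a⟧ ⇝ Z⟦b⟧` whenever `a ≤ b`, and it passes forwards along non-zero morphisms. It also passes
backwards: complete a non-zero `f : W ⟶ Z` to a triangle `W ⟶ Z ⟶ C ⟶ W⟦1⟧` and split `C` into
indecomposables. Either some summand receives a non-zero map from `Z` and maps non-trivially to
`W⟦1⟧`, which gives a path `Z ⇝ W⟦1⟧`; or the summands killed by `Z ⟶ C` form a direct summand of
`W⟦1⟧` through which all of `C ⟶ W⟦1⟧` factors, and indecomposability forces `f` to be an
isomorphism. Hence finite sums of reachable and of unreachable indecomposables decompose the
category, so in a block every indecomposable is reachable.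
-/

universe v

lemma CategoryTheory.Iso.hom_ne_zero {C : Type*} [Category C] [HasZeroMorphisms C] {A B : C}
    (e : A ≅ B) (hA : ¬ IsZero A) : e.hom ≠ 0 :=
  fun h => hA (IsZero.of_mono_eq_zero _ h)

namespace CategoryTheory.Limits

@[simps]
noncomputable def biproduct.isoOfUnique {C : Type*} [Category.{v} C] [HasZeroMorphisms C]
    {J : Type*} [Unique J] (f : J → C) [HasBiproduct f] : ⨁ f ≅ f default where
  hom := biproduct.π f default
  inv := biproduct.ι f default
  hom_inv_id := by
    ext j k
    rw [Unique.eq_default j, Unique.eq_default k]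
    simp

variable {C : Type*} [Category.{v} C] [Preadditive C] [HasFiniteBiproducts C]
  [HasBinaryBiproducts C] {J : Type} [Finite J]

@[simps]
noncomputable def biproduct.isoBiprodSubtype (f : J → C) (p : J → Prop) :
    ⨁ f ≅ (⨁ fun j : {j // p j} => f j) ⊞ ⨁ fun j : {j // ¬ p j} => f j where
  hom := biprod.lift (biproduct.lift fun j => biproduct.π f j)
    (biproduct.lift fun j => biproduct.π f j)
  inv := biprod.desc (biproduct.desc fun j => biproduct.ι f j)
    (biproduct.desc fun j => biproduct.ι f j)
  hom_inv_id := by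
    classical
    have := Fintype.ofFinite J
    rw [biprod.lift_desc, biproduct.lift_desc, biproduct.lift_desc,
      Fintype.sum_subtype_add_sum_subtype p fun j => biproduct.π f j ≫ biproduct.ι f j,
      biproduct.total]
  inv_hom_id := by
    classical
    ext ⟨j, hj⟩ ⟨k, hk⟩ <;> obtain rfl | hjk := eq_or_ne j k
    all_goals first | contradiction | simp_all

end CategoryTheory.Limits

section Indecomposables

variable {C : Type*} [Category C] [Preadditive C] [HasBinaryBiproducts C]

lemma IsIndec.of_iso {A B : C} (h : IsIndec A) (e : A ≅ B) : IsIndec B :=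
  ⟨fun hB => h.1 (hB.of_iso e), fun Y Z i => h.2 Y Z (e ≪≫ i)⟩

lemma IsIndec.shift [HasShift C ℤ] [∀ n : ℤ, (shiftFunctor C n).Additive] {A : C}
    (h : IsIndec A) (n : ℤ) : IsIndec (A⟦n⟧) := by
  have isZero_of_isZero_shift {B : C} (m : ℤ) (hB : IsZero (B⟦m⟧)) : IsZero B :=
    ((shiftFunctor C (-m)).map_isZero hB).of_iso
      ((shiftFunctorCompIsoId C m (-m) (add_neg_cancel m)).app B).symm
  refine ⟨fun hz => h.1 (isZero_of_isZero_shift n hz), fun Y Z e => ?_⟩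
  have := preservesBinaryBiproducts_of_preservesBiproducts (shiftFunctor C (-n))
  have e' : A ≅ Y⟦-n⟧ ⊞ Z⟦-n⟧ :=
    (shiftEquiv C n).unitIso.app A ≪≫ (shiftFunctor C (-n)).mapIso e ≪≫
      (shiftFunctor C (-n)).mapBiprod Y Z
  exact (h.2 _ _ e').imp (isZero_of_isZero_shift (-n)) (isZero_of_isZero_shift (-n))

lemma IsIndec.isZero_or_isIso_of_mono [HasZeroObject C] [HasShift C ℤ]
    [∀ n : ℤ, (shiftFunctor C n).Additive] [Pretriangulated C] {A S : C} (h : IsIndec A)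
    (s : S ⟶ A) [Mono s] : IsZero S ∨ IsIso s := by
  obtain ⟨D, a, b, hT⟩ := distinguished_cocone_triangle s
  obtain ⟨e, -, -⟩ := exists_iso_binaryBiproduct_of_distTriang _ hT
    (Triangle.mor₃_eq_zero_of_mono₁ _ hT (inferInstanceAs (Mono s)))
  exact (h.2 _ _ e).imp id (Triangle.isZero₃_iff_isIso₁ _ hT).1

end Indecomposables

section Paths

variable {C : Type*} [Category C] [Preadditive C] [HasShift C ℤ] [HasBinaryBiproducts C]

lemma PathStep.of_iso {A B : C} (hA : IsIndec A) (e : A ≅ B) : PathStep A B :=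
  ⟨hA, hA.of_iso e, Or.inl ⟨e.hom, e.hom_ne_zero hA.1⟩⟩

variable [∀ n : ℤ, (shiftFunctor C n).Additive]

lemma PathStep.shift {A B : C} (h : PathStep A B) (n : ℤ) : PathStep (A⟦n⟧) (B⟦n⟧) := by
  obtain ⟨hA, hB, ⟨f, hf⟩ | ⟨⟨e⟩⟩⟩ := h
  · exact ⟨hA.shift n, hB.shift n,
      Or.inl ⟨f⟦n⟧', fun h0 => hf ((shiftFunctor C n).map_eq_zero_iff.1 h0)⟩⟩
  · exact ⟨hA.shift n, hB.shift n, Or.inr ⟨(shiftFunctor C n).mapIso e ≪≫ shiftComm A 1 n⟩⟩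

lemma HasPath.shift {A B : C} (h : HasPath A B) (n : ℤ) : HasPath (A⟦n⟧) (B⟦n⟧) :=
  h.lift (fun Z => Z⟦n⟧) fun _ _ hs => PathStep.shift hs n

lemma hasPath_shift_of_le {A : C} (hA : IsIndec A) {a b : ℤ} (hab : a ≤ b) :
    HasPath (A⟦a⟧) (A⟦b⟧) := by
  induction b, hab using Int.leInduction with
  | base => exact .refl
  | succ b _ ih =>
    exact ih.tail ⟨hA.shift b, hA.shift (b + 1), Or.inr ⟨(shiftFunctorAdd C b 1).app A⟩⟩

end Paths

section Triangles

variable {C : Type*} [Category C] [Preadditive C] [HasZeroObject C] [HasShift C ℤ]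
  [∀ n : ℤ, (shiftFunctor C n).Additive] [Pretriangulated C] [HasBinaryBiproducts C]

lemma isIso_of_distTriang_of_isIndec {W Z Co : C} {f : W ⟶ Z} {g : Z ⟶ Co}
    {h : Co ⟶ W⟦(1 : ℤ)⟧} (hT : Triangle.mk f g h ∈ distTriang C) (hW : IsIndec W)
    (hZ : IsIndec Z) (hf : f ≠ 0) {S S' : C} (E : Co ≅ S ⊞ S')
    (hS : g ≫ E.hom ≫ biprod.fst = 0) (hS' : biprod.inr ≫ E.inv ≫ h = 0) : IsIso f := by
  -- `g` kills `E.hom ≫ biprod.fst`, so it factors through `h`; this splits `S ⟶ W⟦1⟧`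
  obtain ⟨ψ, hψ⟩ : ∃ ψ : W⟦(1 : ℤ)⟧ ⟶ S, E.hom ≫ biprod.fst = h ≫ ψ :=
    Triangle.yoneda_exact₃ _ hT _ hS
  have hsplit : (biprod.inl ≫ E.inv ≫ h) ≫ ψ = 𝟙 S := by
    simp only [assoc, ← hψ, Iso.inv_hom_id_assoc, biprod.inl_fst]
  have : Mono (biprod.inl ≫ E.inv ≫ h) := mono_of_mono_fac hsplit
  rcases (hW.shift 1).isZero_or_isIso_of_mono (biprod.inl ≫ E.inv ≫ h) with hS0 | hiso
  · have hh : h = 0 := by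
      rw [← cancel_epi E.inv, comp_zero]
      exact biprod.hom_ext' _ _ (hS0.eq_of_src _ _) (by rw [hS', comp_zero])
    have : Mono f := Triangle.mono₁ _ hT hh
    exact (hZ.isZero_or_isIso_of_mono f).resolve_left hW.1
  · have : Epi ((biprod.inl ≫ E.inv) ≫ h) := by rw [assoc]; infer_instance
    exact absurd (Triangle.mor₁_eq_zero_of_epi₃ _ hT (epi_of_epi (biprod.inl ≫ E.inv) h)) hf

variable [HasFiniteBiproducts C]

lemma hasPath_shift_one_of_ne_zero (hdec : AllObjectsDecompose (C := C)) {W Z : C}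
    (hW : IsIndec W) (hZ : IsIndec Z) (f : W ⟶ Z) (hf : f ≠ 0) : HasPath Z (W⟦(1 : ℤ)⟧) := by
  obtain ⟨Co, g, h, hT⟩ := distinguished_cocone_triangle f
  obtain ⟨n, G, hG, ⟨e⟩⟩ := hdec Co
  by_cases hthrough : ∃ i, g ≫ e.hom ≫ biproduct.π G i ≠ 0 ∧ biproduct.ι G i ≫ e.inv ≫ h ≠ 0
  · obtain ⟨i, hgi, hhi⟩ := hthrough
    exact .head ⟨hZ, hG i, .inl ⟨_, hgi⟩⟩ (.single ⟨hG i, hW.shift 1, .inl ⟨_, hhi⟩⟩)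
  · push Not at hthrough
    have : IsIso f := isIso_of_distTriang_of_isIndec hT hW hZ hf
      (e ≪≫ biproduct.isoBiprodSubtype G fun i => g ≫ e.hom ≫ biproduct.π G i = 0)
      (biproduct.hom_ext _ _ fun i => by simpa using i.2)
      (biproduct.hom_ext' _ _ fun i => by simpa using hthrough i i.2)
    exact .single ⟨hZ, hW.shift 1, Or.inr ⟨(shiftFunctor C 1).mapIso (asIso f)⟩⟩

end Triangles

section ShiftedPaths

variable {C : Type*} [Category C] [Preadditive C] [HasShift C ℤ] [HasBinaryBiproducts C]

def HasPathToShift (X Z : C) : Prop := ∃ m : ℕ, HasPath X (Z⟦(m : ℤ)⟧)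

lemma HasPathToShift.refl {X : C} (hX : IsIndec X) : HasPathToShift X X :=
  ⟨0, .single (.of_iso hX ((shiftFunctorZero C ℤ).app X).symm)⟩

variable [∀ n : ℤ, (shiftFunctor C n).Additive]

lemma HasPathToShift.tail {X A B : C} (h : HasPathToShift X A) (hAB : HasPath A B) :
    HasPathToShift X B :=
  let ⟨m, hm⟩ := h
  ⟨m, hm.trans (hAB.shift m)⟩

lemma HasPathToShift.codomain_of_ne_zero {X A B : C} (h : HasPathToShift X A) (hA : IsIndec A)
    (hB : IsIndec B) (f : A ⟶ B) (hf : f ≠ 0) : HasPathToShift X B :=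
  h.tail (.single ⟨hA, hB, .inl ⟨f, hf⟩⟩)

lemma HasPathToShift.of_iso {X A B : C} (h : HasPathToShift X A) (hA : IsIndec A) (e : A ≅ B) :
    HasPathToShift X B :=
  h.codomain_of_ne_zero hA (hA.of_iso e) e.hom (e.hom_ne_zero hA.1)

lemma HasPathToShift.shift {X Z : C} (h : HasPathToShift X Z) (hZ : IsIndec Z) (n : ℤ) :
    HasPathToShift X (Z⟦n⟧) := by
  obtain ⟨m, hm⟩ := h
  refine ⟨(m - n).toNat, (hm.trans (hasPath_shift_of_le hZ (b := n + (m - n).toNat) ?_)).tail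
    (.of_iso (hZ.shift _) ((shiftFunctorAdd' C n _ _ rfl).app Z))⟩
  omega

lemma HasPathToShift.domain_of_ne_zero [HasZeroObject C] [Pretriangulated C]
    [HasFiniteBiproducts C] (hdec : AllObjectsDecompose (C := C)) {X A B : C}
    (h : HasPathToShift X B) (hA : IsIndec A) (hB : IsIndec B) (f : A ⟶ B) (hf : f ≠ 0) :
    HasPathToShift X A := by
  have h' := (h.tail (hasPath_shift_one_of_ne_zero hdec hA hB f hf)).shift (hA.shift 1) (-1)
  exact h'.of_iso ((hA.shift 1).shift (-1))
    ((shiftFunctorCompIsoId C 1 (-1) (by norm_num)).app A)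

end ShiftedPaths

section FiniteSums

variable {C : Type*} [Category C] [Preadditive C] [HasFiniteBiproducts C]

def IsFiniteSumOf (R : C → Prop) (A : C) : Prop :=
  ∃ (ι : Type) (_ : Finite ι) (G : ι → C), (∀ i, R (G i)) ∧ Nonempty (A ≅ ⨁ G)

variable {R : C → Prop}

lemma IsFiniteSumOf.of_iso {A B : C} (h : IsFiniteSumOf R A) (e : A ≅ B) : IsFiniteSumOf R B :=
  let ⟨ι, hι, G, hG, ⟨eA⟩⟩ := h
  ⟨ι, hι, G, hG, ⟨e.symm ≪≫ eA⟩⟩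

lemma IsFiniteSumOf.of_prop {A : C} (h : R A) : IsFiniteSumOf R A :=
  ⟨Unit, inferInstance, fun _ => A, fun _ => h, ⟨(biproduct.isoOfUnique fun _ : Unit => A).symm⟩⟩

lemma IsFiniteSumOf.hom_eq_zero {S : C → Prop} {A B : C} (hA : IsFiniteSumOf R A)
    (hB : IsFiniteSumOf S B) (hRS : ∀ A B, R A → S B → ∀ f : A ⟶ B, f = 0) (f : A ⟶ B) :
    f = 0 := by
  obtain ⟨ι, _, G, hG, ⟨eA⟩⟩ := hA
  obtain ⟨κ, _, H, hH, ⟨eB⟩⟩ := hB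
  rw [← cancel_epi eA.inv, ← cancel_mono eB.hom, comp_zero, zero_comp]
  ext j i
  simpa using hRS _ _ (hG i) (hH j) _

lemma IsFiniteSumOf.shift [HasShift C ℤ] [∀ n : ℤ, (shiftFunctor C n).Additive] {A : C} {n : ℤ}
    (h : IsFiniteSumOf R A) (hR : ∀ Z, R Z → R (Z⟦n⟧)) : IsFiniteSumOf R (A⟦n⟧) :=
  let ⟨ι, hι, G, hG, ⟨e⟩⟩ := h
  ⟨ι, hι, fun i => (G i)⟦n⟧, fun i => hR _ (hG i),
    ⟨(shiftFunctor C n).mapIso e ≪≫ (shiftFunctor C n).mapBiproduct G⟩⟩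

variable [HasBinaryBiproducts C]

lemma IsFiniteSumOf.exists_iso_biprod {A : C} (h : IsFiniteSumOf R A) (p : C → Prop) :
    ∃ A' A'' : C, IsFiniteSumOf (fun Z => R Z ∧ p Z) A' ∧
      IsFiniteSumOf (fun Z => R Z ∧ ¬ p Z) A'' ∧ Nonempty (A ≅ A' ⊞ A'') :=
  let ⟨_, _, G, hG, ⟨e⟩⟩ := h
  ⟨_, _, ⟨{i // p (G i)}, inferInstance, fun i => G i, fun i => ⟨hG i, i.2⟩, ⟨Iso.refl _⟩⟩,
    ⟨{i // ¬ p (G i)}, inferInstance, fun i => G i, fun i => ⟨hG i, i.2⟩, ⟨Iso.refl _⟩⟩,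
    ⟨e ≪≫ biproduct.isoBiprodSubtype G fun i => p (G i)⟩⟩

lemma AllObjectsDecompose.isFiniteSumOf (hdec : AllObjectsDecompose (C := C)) (A : C) :
    IsFiniteSumOf IsIndec A :=
  let ⟨n, G, hG, e⟩ := hdec A
  ⟨Fin n, inferInstance, G, hG, e⟩

lemma isProductDecomp_isFiniteSumOf [HasShift C ℤ] [∀ n : ℤ, (shiftFunctor C n).Additive]
    (hdec : AllObjectsDecompose (C := C)) (R : C → Prop)
    (hshift : ∀ (Z : C) (n : ℤ), IsIndec Z → R Z → R (Z⟦n⟧))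
    (hcod : ∀ {A B : C} (f : A ⟶ B), f ≠ 0 → IsIndec A → IsIndec B → R A → R B)
    (hdom : ∀ {A B : C} (f : A ⟶ B), f ≠ 0 → IsIndec A → IsIndec B → R B → R A)
    {X Y : C} (hX : IsIndec X) (hRX : R X) (hY : IsIndec Y) (hRY : ¬ R Y) :
    IsProductDecomp C (IsFiniteSumOf fun Z => IsIndec Z ∧ R Z)
      (IsFiniteSumOf fun Z => IsIndec Z ∧ ¬ R Z) := by
  refine ⟨fun e h => h.of_iso e, fun e h => h.of_iso e, ⟨X, .of_prop ⟨hX, hRX⟩, hX.1⟩,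
    ⟨Y, .of_prop ⟨hY, hRY⟩, hY.1⟩, fun A B hA hB => hA.hom_eq_zero hB ?_,
    fun A B hA hB => hA.hom_eq_zero hB ?_, fun A n hA => hA.shift ?_, fun A n hA => hA.shift ?_,
    fun A => (hdec.isFiniteSumOf A).exists_iso_biprod R⟩
  · rintro A B ⟨hA, hRA⟩ ⟨hB, hRB⟩ f
    by_contra hf
    exact hRB (hcod f hf hA hB hRA)
  · rintro A B ⟨hA, hRA⟩ ⟨hB, hRB⟩ f
    by_contra hf
    exact hRA (hdom f hf hA hB hRB)
  · rintro Z ⟨hZ, hRZ⟩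
    exact ⟨hZ.shift n, hshift Z n hZ hRZ⟩
  · rintro Z ⟨hZ, hRZ⟩
    refine ⟨hZ.shift n, fun hRZn => hRZ ?_⟩
    have hZ' := (hZ.shift n).shift (-n)
    exact hcod ((shiftFunctorCompIsoId C n (-n) (add_neg_cancel n)).app Z).hom
      (Iso.hom_ne_zero _ hZ'.1) hZ' hZ (hshift _ (-n) (hZ.shift n) hRZn)

end FiniteSums

theorem path_to_nonneg_shift_of_block
    {C : Type*} [Category C] [Preadditive C] [HasZeroObject C] [HasShift C ℤ]
    [∀ n : ℤ, (shiftFunctor C n).Additive] [Pretriangulated C]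
    [HasBinaryBiproducts C] [HasFiniteBiproducts C] [EssentiallySmall C]
    (hdec : AllObjectsDecompose (C := C)) (hblock : IsBlock C) :
    ∀ X Y : C, IsIndec X → IsIndec Y → ∃ m : ℕ, HasPath X (Y⟦(m : ℤ)⟧) := by
  intro X Y hX hY
  by_contra hXY
  exact hblock ⟨_, _, isProductDecomp_isFiniteSumOf hdec (HasPathToShift X)
    (fun _ n hZ h => h.shift hZ n) (fun f hf hA hB h => h.codomain_of_ne_zero hA hB f hf)
    (fun f hf hA hB h => h.domain_of_ne_zero hdec hA hB f hf) hX (.refl hX) hY hXY⟩
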